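/- arXiv:2306.11220 — 2 statements merged into one kernel-verified Lean document; each statement's English description precedes it below -/
import Mathlib

section
/- Fix integers $q, k, b \geq 1$, $\ell \geq 1$, $s \geq 0$ and $t$ with $k\ell + s + 1 \leq t \leq \min\{q, b/2\}$. In the random bipartite cuckoo graph with $q$ left vertices, where each left vertex independently connects to $\ell$ vertices in one uniformly random bin from each of $k$ disjoint groups of $b/k$ bins, plus all $s$ stash vertices, the probability that there exists a set $X$ of $t$ left vertices with $|N(X)| < t$ is at most $\binom{q}{t} \cdot \binom{b}{\lfloor (t-s-1)/\ell \rfloor} \cdot \left(\frac{2(t-s-1)}{b\ell}\right)^{kt}$. -/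
/-!
Union bound over pairs `(X, Y)`, with `X` a set of `t` items and `Y` a set of
`m = ⌊(t - s - 1) / ℓ⌋` bins: if `s + ℓ |N(X)| < t`, the bins used by `X` are among at most `m`
bins, hence inside some such `Y`. For fixed `(X, Y)`, the items of `X` all land in `Y` with
probability `∏ⱼ (|Yⱼ| / n) ^ t`, where `Yⱼ` is the part of `Y` in sub-table `j` of `n = b / k`
bins; since `∑ⱼ |Yⱼ| = m`, AM-GM bounds this by `(m / b) ^ (k t)`, and `m / b ≤ 2 (t - s - 1) / (b ℓ)`.
-/

open Finset

theorem Real.prod_le_sum_div_card_pow {ι : Type*} (s : Finset ι) (z : ι → ℝ)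
    (hz : ∀ i ∈ s, 0 ≤ z i) : ∏ i ∈ s, z i ≤ ((∑ i ∈ s, z i) / #s) ^ #s := by
  rcases s.eq_empty_or_nonempty with rfl | hs
  · simp
  have hcard : (0 : ℝ) < #s := by exact_mod_cast hs.card_pos
  have hamgm := Real.geom_mean_le_arith_mean_weighted s (fun _ => (#s : ℝ)⁻¹) z
    (fun _ _ => by positivity) (by simp [hcard.ne']) hz
  rw [Real.finsetProd_rpow s z hz, ← mul_sum, inv_mul_eq_div] at hamgm
  calc ∏ i ∈ s, z i = ((∏ i ∈ s, z i) ^ (#s : ℝ)⁻¹) ^ #s := by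
        rw [← Real.rpow_natCast, ← Real.rpow_mul (prod_nonneg hz), inv_mul_cancel₀ hcard.ne',
          Real.rpow_one]
    _ ≤ _ := pow_le_pow_left₀ (Real.rpow_nonneg (prod_nonneg hz) _) hamgm _

theorem cast_sub_div_div_le (s t ℓ : ℕ) {N : ℝ} (hN : 0 ≤ N) (hst : s + 1 ≤ t) :
    (((t - s - 1) / ℓ : ℕ) : ℝ) / N ≤ 2 * ((t : ℝ) - s - 1) / (N * ℓ) := by
  have hts : (s : ℝ) + 1 ≤ t := by exact_mod_cast hst
  calc (((t - s - 1) / ℓ : ℕ) : ℝ) / N ≤ ((t - s - 1 : ℕ) : ℝ) / ℓ / N := by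
        gcongr
        exact Nat.cast_div_le
    _ = ((t : ℝ) - s - 1) / (N * ℓ) := by
        rw [Nat.sub_sub, Nat.cast_sub hst]
        push_cast
        ring
    _ ≤ _ := by gcongr; linarith

section Cuckoo

variable {ι κ β : Type*} [Fintype ι] [Fintype κ] [Fintype β] [DecidableEq ι] [DecidableEq κ]
  [DecidableEq β]

def occupiedBins (h : ι → κ → β) (X : Finset ι) : Finset (κ × β) :=
  X.biUnion fun i => univ.image fun j => (j, h i j)

def confined (X : Finset ι) (Y : Finset (κ × β)) : Finset (ι → κ → β) :=
  {h | ∀ i ∈ X, ∀ j, (j, h i j) ∈ Y}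

omit [Fintype ι] [DecidableEq ι] in
theorem sum_card_fibers_fst (Y : Finset (κ × β)) : ∑ j, #{v | (j, v) ∈ Y} = #Y := by
  simp only [card_filter]
  rw [← Fintype.sum_prod_type' (fun j v => if (j, v) ∈ Y then 1 else 0)]
  simp

theorem card_confined (X : Finset ι) (Y : Finset (κ × β)) :
    #(confined X Y) = (∏ j, #{v | (j, v) ∈ Y}) ^ #X
      * (Fintype.card β ^ Fintype.card κ) ^ (Fintype.card ι - #X) := by
  have : confined X Y = Fintype.piFinset fun i =>
      if i ∈ X then Fintype.piFinset fun j => ({v | (j, v) ∈ Y} : Finset β) else univ := by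
    ext h
    simp only [confined, mem_filter, mem_univ, true_and, Fintype.mem_piFinset]
    refine forall_congr' fun i => ?_
    split_ifs with hi <;> simp [hi]
  rw [this, Fintype.card_piFinset]
  simp only [apply_ite card, prod_ite, Fintype.card_piFinset, card_univ, Fintype.card_pi,
    prod_const, filter_not, filter_mem_eq_inter, univ_inter, card_sdiff_of_subset X.subset_univ]

theorem card_confined_div_card_le [Nonempty β] (X : Finset ι) (Y : Finset (κ × β)) :
    (#(confined X Y) : ℝ) / Fintype.card (ι → κ → β)
      ≤ (#Y / (Fintype.card κ * Fintype.card β)) ^ (Fintype.card κ * #X) := by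
  have hamgm : ∏ j, (#{v | (j, v) ∈ Y} : ℝ) ≤ (#Y / Fintype.card κ) ^ Fintype.card κ := by
    have := Real.prod_le_sum_div_card_pow univ (fun j => (#{v | (j, v) ∈ Y} : ℝ)) (by simp)
    rwa [← Nat.cast_sum, sum_card_fibers_fst, card_univ] at this
  have hcard : (Fintype.card (ι → κ → β) : ℝ) = ((Fintype.card β : ℝ) ^ Fintype.card κ) ^ #X
      * ((Fintype.card β : ℝ) ^ Fintype.card κ) ^ (Fintype.card ι - #X) := by
    rw [← pow_add, Nat.add_sub_cancel' (card_le_univ X)]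
    simp only [Fintype.card_pi, prod_const, card_univ, Nat.cast_pow]
  rw [card_confined, hcard]
  push_cast
  rw [mul_div_mul_right _ _ (by positivity), ← div_pow]
  calc ((∏ j, (#{v | (j, v) ∈ Y} : ℝ)) / Fintype.card β ^ Fintype.card κ) ^ #X
      ≤ ((#Y / Fintype.card κ) ^ Fintype.card κ / Fintype.card β ^ Fintype.card κ) ^ #X := by
        gcongr
    _ = _ := by rw [← div_pow, div_div, pow_mul]

theorem filter_exists_card_occupiedBins_le_subset (t m : ℕ)
    (hm : m ≤ Fintype.card κ * Fintype.card β) :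
    ({h | ∃ X : Finset ι, #X = t ∧ #(occupiedBins h X) ≤ m} : Finset (ι → κ → β))
      ⊆ (powersetCard t univ ×ˢ powersetCard m univ).biUnion fun p => confined p.1 p.2 := by
  intro h hh
  obtain ⟨X, hX, hbins⟩ := (mem_filter.1 hh).2
  obtain ⟨Y, hbinsY, -, hY⟩ :=
    exists_subsuperset_card_eq (subset_univ (occupiedBins h X)) hbins (by simpa using hm)
  simp only [mem_biUnion, mem_product, mem_powersetCard, subset_univ, true_and, Prod.exists]
  refine ⟨X, Y, ⟨hX, hY⟩, mem_filter.2 ⟨mem_univ _, fun i hi j => hbinsY ?_⟩⟩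
  exact mem_biUnion.2 ⟨i, hi, mem_image_of_mem _ (mem_univ j)⟩

theorem card_filter_exists_card_occupiedBins_le_div_le [Nonempty β] (t m : ℕ)
    (hm : m ≤ Fintype.card κ * Fintype.card β) :
    (#({h | ∃ X : Finset ι, #X = t ∧ #(occupiedBins h X) ≤ m} : Finset (ι → κ → β)) : ℝ)
        / Fintype.card (ι → κ → β)
      ≤ (Fintype.card ι).choose t * (Fintype.card κ * Fintype.card β).choose m
        * (m / (Fintype.card κ * Fintype.card β)) ^ (Fintype.card κ * t) := by
  set P := powersetCard t (univ : Finset ι) ×ˢ powersetCard m (univ : Finset (κ × β))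
  calc _ ≤ (∑ p ∈ P, (#(confined p.1 p.2) : ℝ)) / Fintype.card (ι → κ → β) := by
        gcongr
        exact_mod_cast (card_le_card
          (filter_exists_card_occupiedBins_le_subset (ι := ι) t m hm)).trans card_biUnion_le
    _ = ∑ p ∈ P, (#(confined p.1 p.2) : ℝ) / Fintype.card (ι → κ → β) := sum_div _ _ _
    _ ≤ ∑ _p ∈ P, ((m : ℝ) / (Fintype.card κ * Fintype.card β)) ^ (Fintype.card κ * t) := by
        refine sum_le_sum fun p hp => ?_
        obtain ⟨hX, hY⟩ := mem_product.1 hp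
        have := card_confined_div_card_le p.1 p.2
        rwa [(mem_powersetCard.1 hX).2, (mem_powersetCard.1 hY).2] at this
    _ = _ := by
        rw [sum_const, nsmul_eq_mul, card_product, card_powersetCard, card_powersetCard,
          card_univ, card_univ, Fintype.card_prod]
        push_cast
        ring

end Cuckoo

open Classical in
theorem stmt_3_general (q k b ℓ s t : ℕ) (hk : 1 ≤ k) (hb : 1 ≤ b) (hl : 1 ≤ ℓ)
    (hkb : k ∣ b) (ht1 : k * ℓ + s + 1 ≤ t) (htb : t ≤ b / 2) :
    ((Finset.univ.filter (fun h : Fin q → Fin k → Fin (b / k) =>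
        ∃ X : Finset (Fin q), X.card = t ∧
          s + ℓ * (X.biUnion (fun i => Finset.univ.image (fun j : Fin k => (j, h i j)))).card
            < t)).card : ℝ) / (Fintype.card (Fin q → Fin k → Fin (b / k)))
      ≤ (q.choose t : ℝ) * (b.choose ((t - s - 1) / ℓ) : ℝ)
          * (2 * ((t : ℝ) - s - 1) / ((b : ℝ) * ℓ)) ^ (k * t) := by
  obtain ⟨n, rfl⟩ := hkb
  rw [Nat.mul_div_cancel_left n hk]
  have : NeZero n := ⟨by rintro rfl; simp at hb⟩
  set m := (t - s - 1) / ℓ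
  have hbad : ∀ c, s + ℓ * c < t → c ≤ m := fun c hc =>
    (Nat.le_div_iff_mul_le hl).2 (by rw [mul_comm]; omega)
  have hmb : m ≤ k * n := (Nat.div_le_self _ _).trans (by omega)
  calc _ ≤ (#({h | ∃ X : Finset (Fin q), #X = t ∧ #(occupiedBins h X) ≤ m} :
          Finset (Fin q → Fin k → Fin n)) : ℝ) / Fintype.card (Fin q → Fin k → Fin n) := by
        gcongr with h _ X _
        exact hbad _
    _ ≤ q.choose t * (k * n).choose m * (m / (k * n)) ^ (k * t) := by
        simpa using card_filter_exists_card_occupiedBins_le_div_le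
          (ι := Fin q) (κ := Fin k) (β := Fin n) t m (by simpa using hmb)
    _ ≤ _ := by
        push_cast
        exact mul_le_mul_of_nonneg_left (pow_le_pow_left₀ (by positivity)
          (cast_sub_div_div_le s t ℓ (by positivity) (by omega)) _) (by positivity)

open Classical in
/-- In the random bipartite cuckoo graph `G(q,k,b,ℓ,s)` (each of `q` items picks one uniformly
random bin in each of `k` disjoint sub-tables of `b/k` bins; bins have capacity `ℓ`; every item
is adjacent to all `s` stash vertices), for `k*ℓ+s+1 ≤ t ≤ min(q, b/2)` the probability that
some set `X` of `t` left vertices has `|N(X)| < t` is at most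
`C(q,t) · C(b, ⌊(t-s-1)/ℓ⌋) · (2(t-s-1)/(bℓ))^(k·t)`. -/
theorem stmt_3 (q k b ℓ s t : ℕ) (hq : 1 ≤ q) (hk : 1 ≤ k) (hb : 1 ≤ b) (hl : 1 ≤ ℓ)
    (hkb : k ∣ b) (ht1 : k * ℓ + s + 1 ≤ t) (htq : t ≤ q) (htb : t ≤ b / 2) :
    ((Finset.univ.filter (fun h : Fin q → Fin k → Fin (b / k) =>
        ∃ X : Finset (Fin q), X.card = t ∧
          s + ℓ * (X.biUnion (fun i => Finset.univ.image (fun j : Fin k => (j, h i j)))).card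
            < t)).card : ℝ) / (Fintype.card (Fin q → Fin k → Fin (b / k)))
      ≤ (q.choose t : ℝ) * (b.choose ((t - s - 1) / ℓ) : ℝ)
          * (2 * ((t : ℝ) - s - 1) / ((b : ℝ) * ℓ)) ^ (k * t) :=
  stmt_3_general q k b ℓ s t hk hb hl hkb ht1 htb
end

section
/- Let $n$ be sufficiently large, $b \geq (2e)^5 n$, and $k \geq 4$. Then for every $t$ with $k+1 \leq t \leq n$, $\binom{n}{t}\binom{b}{t-1}\left(\frac{2(t-1)}{b}\right)^{kt} \leq \left(\frac{t-1}{2n}\right)^{(k-3)(t-1)}$. -/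
/-!
Bound both binomial coefficients by `C(m, r) ≤ (e m / r) ^ r`. Writing `s = t - 1` and replacing
`e n / t` by the larger `e n / s`, the left-hand side is at most `X ^ s * Y` with
`X = (e n / s) (e b / s) (2 s / b) ^ k` and `Y = (e n / s) (2 s / b) ^ k`. Clearing denominators and
using `s ≤ n`, both `X ≤ (s / 2n) ^ (k - 3)` and `Y ≤ 1` reduce to
`e ^ a 2 ^ c n ^ m ≤ b ^ m` with `a, c ≤ 5 m`, which is where `b ≥ (2e) ^ 5 n` comes in.
-/

open Real Nat

theorem Nat.div_exp_one_pow_le_factorial (r : ℕ) : ((r : ℝ) / exp 1) ^ r ≤ r ! := by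
  have h := pow_div_factorial_le_exp (r : ℝ) r.cast_nonneg r
  rw [← exp_one_pow, div_le_iff₀ (by positivity)] at h
  rw [div_pow, div_le_iff₀ (by positivity), mul_comm]
  exact h

theorem Nat.choose_le_exp_one_mul_div_pow (n r : ℕ) :
    (n.choose r : ℝ) ≤ (exp 1 * n / r) ^ r := by
  rcases r.eq_zero_or_pos with rfl | hr
  · simp
  calc (n.choose r : ℝ) ≤ (n : ℝ) ^ r / r ! := Nat.choose_le_pow_div r n
    _ ≤ (n : ℝ) ^ r / ((r : ℝ) / exp 1) ^ r :=
      div_le_div_of_nonneg_left (by positivity) (by positivity) (div_exp_one_pow_le_factorial r)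
    _ = (exp 1 * n / r) ^ r := by rw [← div_pow]; field_simp

theorem pow_mul_two_pow_mul_pow_le {E N B : ℝ} (hE : 1 ≤ E) (hN : 0 ≤ N)
    (hB : (2 * E) ^ 5 * N ≤ B) {a c m : ℕ} (ha : a ≤ 5 * m) (hc : c ≤ 5 * m) :
    E ^ a * 2 ^ c * N ^ m ≤ B ^ m :=
  calc E ^ a * 2 ^ c * N ^ m ≤ E ^ (5 * m) * 2 ^ (5 * m) * N ^ m := by
        gcongr
        norm_num
    _ = ((2 * E) ^ 5 * N) ^ m := by
      rw [pow_mul E, pow_mul (2 : ℝ), ← mul_pow, ← mul_pow, mul_pow 2 E 5, mul_comm (E ^ 5)]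
    _ ≤ B ^ m := by gcongr

section BinomialFactors

variable {n b s : ℝ} (hs : 0 < s) (hsn : s ≤ n) (hb : (2 * exp 1) ^ 5 * n ≤ b)
include hs hsn hb

theorem exp_one_mul_div_mul_two_mul_div_pow_le_one {k : ℕ} (hk : 1 ≤ k) :
    exp 1 * n / s * (2 * s / b) ^ k ≤ 1 := by
  obtain ⟨j, rfl⟩ : ∃ j, k = j + 1 := ⟨k - 1, by omega⟩
  have hn : 0 < n := hs.trans_le hsn
  have hb' : 0 < b := lt_of_lt_of_le (by positivity) hb
  have key := pow_mul_two_pow_mul_pow_le (one_le_exp zero_le_one) hn.le hb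
    (a := 1) (c := j + 1) (m := j + 1) (by omega) (by omega)
  calc exp 1 * n / s * (2 * s / b) ^ (j + 1)
      = exp 1 * 2 ^ (j + 1) * n * s ^ j / b ^ (j + 1) := by
        rw [div_pow, mul_pow, pow_succ s]; field_simp
    _ ≤ exp 1 * 2 ^ (j + 1) * n * n ^ j / b ^ (j + 1) := by gcongr
    _ = exp 1 ^ 1 * 2 ^ (j + 1) * n ^ (j + 1) / b ^ (j + 1) := by ring
    _ ≤ 1 := (div_le_one (by positivity)).2 key

theorem exp_one_mul_div_mul_exp_one_mul_div_mul_two_mul_div_pow_le {k : ℕ} (hk : 3 ≤ k) :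
    exp 1 * n / s * (exp 1 * b / s) * (2 * s / b) ^ k ≤ (s / (2 * n)) ^ (k - 3) := by
  obtain ⟨j, rfl⟩ : ∃ j, k = j + 3 := ⟨k - 3, by omega⟩
  have hn : 0 < n := hs.trans_le hsn
  have hb' : 0 < b := lt_of_lt_of_le (by positivity) hb
  have key := pow_mul_two_pow_mul_pow_le (one_le_exp zero_le_one) hn.le hb
    (a := 2) (c := 2 * j + 3) (m := j + 2) (by omega) (by omega)
  calc exp 1 * n / s * (exp 1 * b / s) * (2 * s / b) ^ (j + 3)
      = exp 1 ^ 2 * 2 ^ (j + 3) * n * s ^ (j + 1) / b ^ (j + 2) := by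
        rw [div_pow, mul_pow, pow_succ s, pow_succ s, pow_succ b]; field_simp
    _ ≤ (s / (2 * n)) ^ (j + 3 - 3) := by
      rw [Nat.add_sub_cancel, div_pow, div_le_div_iff₀ (by positivity) (by positivity)]
      calc exp 1 ^ 2 * 2 ^ (j + 3) * n * s ^ (j + 1) * (2 * n) ^ j
          = s ^ j * (exp 1 ^ 2 * 2 ^ (2 * j + 3) * n ^ (j + 1) * s) := by ring
        _ ≤ s ^ j * (exp 1 ^ 2 * 2 ^ (2 * j + 3) * n ^ (j + 1) * n) := by gcongr
        _ = s ^ j * (exp 1 ^ 2 * 2 ^ (2 * j + 3) * n ^ (j + 2)) := by ring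
        _ ≤ s ^ j * b ^ (j + 2) := by gcongr

end BinomialFactors

theorem choose_succ_mul_choose_mul_two_mul_div_pow_le {n b s k : ℕ} (hs : 0 < s) (hsn : s ≤ n)
    (hb : (2 * exp 1) ^ 5 * n ≤ (b : ℝ)) (hk : 3 ≤ k) :
    (n.choose (s + 1) : ℝ) * b.choose s * (2 * s / b) ^ (k * (s + 1))
      ≤ ((s : ℝ) / (2 * n)) ^ ((k - 3) * s) := by
  have hs' : (0 : ℝ) < s := by exact_mod_cast hs
  have hsn' : (s : ℝ) ≤ n := by exact_mod_cast hsn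
  calc (n.choose (s + 1) : ℝ) * b.choose s * (2 * s / b) ^ (k * (s + 1))
      ≤ (exp 1 * n / (s + 1 : ℕ)) ^ (s + 1) * (exp 1 * b / s) ^ s
          * (2 * s / b) ^ (k * (s + 1)) := by
        gcongr
        exacts [choose_le_exp_one_mul_div_pow n (s + 1), choose_le_exp_one_mul_div_pow b s]
    _ ≤ (exp 1 * n / s) ^ (s + 1) * (exp 1 * b / s) ^ s * (2 * s / b) ^ (k * (s + 1)) := by
        gcongr
        exact_mod_cast s.le_succ
    _ = (exp 1 * n / s * (exp 1 * b / s) * (2 * s / b) ^ k) ^ s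
          * (exp 1 * n / s * (2 * s / b) ^ k) := by
        rw [pow_mul']; ring
    _ ≤ ((s / (2 * n)) ^ (k - 3)) ^ s * 1 := by
        gcongr
        exacts [exp_one_mul_div_mul_exp_one_mul_div_mul_two_mul_div_pow_le hs' hsn' hb hk,
          exp_one_mul_div_mul_two_mul_div_pow_le_one hs' hsn' hb (by omega)]
    _ = ((s : ℝ) / (2 * n)) ^ ((k - 3) * s) := by rw [mul_one, ← pow_mul]

/-- For sufficiently large `n`, `b ≥ (2e)^5 · n` and `k ≥ 4`: for every `t` with
`k+1 ≤ t ≤ n`, `C(n,t)·C(b,t-1)·(2(t-1)/b)^(k·t) ≤ ((t-1)/(2n))^((k-3)(t-1))`. -/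
theorem stmt_5 : ∃ N : ℕ, ∀ n : ℕ, N ≤ n → ∀ b k t : ℕ,
    (2 * Real.exp 1) ^ 5 * n ≤ (b : ℝ) → 4 ≤ k → k + 1 ≤ t → t ≤ n →
    (n.choose t : ℝ) * (b.choose (t - 1) : ℝ) * (2 * ((t : ℝ) - 1) / b) ^ (k * t)
      ≤ (((t : ℝ) - 1) / (2 * n)) ^ ((k - 3) * (t - 1)) := by
  refine ⟨0, fun n _ b k t hb hk hkt htn => ?_⟩
  obtain ⟨s, rfl⟩ : ∃ s, t = s + 1 := ⟨t - 1, by omega⟩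
  rw [Nat.add_sub_cancel, Nat.cast_succ, add_sub_cancel_right]
  exact choose_succ_mul_choose_mul_two_mul_div_pow_le (by omega) (by omega) hb (by omega)
end
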